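/- Let (μ_n) be a single-ball-addition Pólya urn process on a measurable colour space S, with random replacements R_x = δ_{r_x}, where for each x ∈ S, r_x is a random element of S with distribution ρ_x ∈ P(S), x ↦ ρ_x a probability kernel. Define μ*_n := μ_n · ρ, i.e. μ*_n(A) = ∫_S ρ_x(A) dμ_n(x). Then the sequence (μ*_n) is itself a Pólya urn process, with colour space S, initial composition μ_0 · ρ, and deterministic replacements R'_x = ρ_x ∈ P(S). -/

import Mathlib

open MeasureTheory ProbabilityTheory Filter Topology
open scoped ENNReal NNReal

/-- **Lemma 2.2 (single-ball-addition urns and their kernel compositions).**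

Let `(μ n)` be a single-ball-addition Pólya urn process on a measurable colour
space `S`: the composition is `μ n ω = μ₀ + ∑_{k<n} δ_{Y k}`, where, given the past
(the filtration `𝔽 n` generated by the previous draws and additions), the colour
`X n` is drawn with the normalized distribution `μ̃ n`, and then the added ball
`Y n` has conditional law `κ (X n)` given the past and `X n`, for a Markov kernel
`κ` (so the random replacement is `R_x = δ_{r_x}` with `r_x ∼ κ x`). Let
`μ* n := μ n · κ` be the composition of `μ n` with the kernel `κ`,
`(μ n · κ)(A) = ∫ κ x A dμ n x`. Then `(μ* n)` is itself a Pólya urn process with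
initial composition `μ₀ · κ` and deterministic replacements `R'_x = κ x ∈ P(S)`:
its draws are the `Y n`, satisfying `μ* (n+1) = μ* n + κ (Y n)`, and, given the
past `𝔾 n` of the new process, `Y n` is drawn with the normalized distribution
of `μ* n`. -/
theorem single_ball_addition_urn_kernel_composition_is_polya_urn
    (S : Type) (mS : MeasurableSpace S)
    (Ω : Type) (mΩ : MeasurableSpace Ω) (P : Measure Ω) [IsProbabilityMeasure P]
    -- the replacement kernel x ↦ κ x = law of the added colour r_x
    (κ : ProbabilityTheory.Kernel S S) [IsMarkovKernel κ]
    -- arbitrary non-zero finite initial composition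
    (μ₀ : Measure S) [IsFiniteMeasure μ₀] (hμ₀ : μ₀ ≠ 0)
    -- the drawn colours X n and the added colours Y n
    (X Y : ℕ → Ω → S)
    (hXm : ∀ n, Measurable (X n)) (hYm : ∀ n, Measurable (Y n))
    -- the urn composition process: single ball additions
    (μ : ℕ → Ω → Measure S)
    (hμ : ∀ n ω, μ n ω = μ₀ + ∑ k ∈ Finset.range n, Measure.dirac (Y k ω))
    -- the filtration of the past
    (𝔽 : ℕ → MeasurableSpace Ω)
    (h𝔽 : ∀ n, 𝔽 n = ⨆ k ∈ Finset.range n,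
      (MeasurableSpace.comap (X k) inferInstance ⊔ MeasurableSpace.comap (Y k) inferInstance))
    -- `X n` is drawn with the normalized composition `μ̃ n`, given the past
    (hdraw : ∀ n, ∀ A : Set S, MeasurableSet A →
      (P[(fun ω => Set.indicator A (fun _ => (1 : ℝ)) (X n ω)) | 𝔽 n]
        =ᵐ[P] fun ω => (μ n ω A).toReal / (μ n ω Set.univ).toReal))
    -- given the past and `X n`, the added colour `Y n` has law `κ (X n)`
    (hY : ∀ n, ∀ A : Set S, MeasurableSet A →
      (P[(fun ω => Set.indicator A (fun _ => (1 : ℝ)) (Y n ω))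
          | 𝔽 n ⊔ MeasurableSpace.comap (X n) inferInstance]
        =ᵐ[P] fun ω => (κ (X n ω) A).toReal))
    -- the composed process μ* n = μ n · κ
    (μs : ℕ → Ω → Measure S)
    (hμs : ∀ n ω, μs n ω = (μ n ω).bind (fun x => κ x))
    -- the filtration of the past of the composed process
    (𝔾 : ℕ → MeasurableSpace Ω)
    (h𝔾 : ∀ n, 𝔾 n = ⨆ k ∈ Finset.range n, MeasurableSpace.comap (Y k) inferInstance) :
    -- (μ* n) is a Pólya urn process with deterministic replacements κ x:
    -- initial composition μ₀ · κ,
    (∀ ω, μs 0 ω = μ₀.bind (fun x => κ x)) ∧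
    -- update rule μ* (n+1) = μ* n + κ (Y n) with drawn colours Y n,
    (∀ n ω, μs (n + 1) ω = μs n ω + κ (Y n ω)) ∧
    -- and, given its own past, Y n is drawn with the normalized composition μ̃* n
    (∀ n, ∀ A : Set S, MeasurableSet A →
      (P[(fun ω => Set.indicator A (fun _ => (1 : ℝ)) (Y n ω)) | 𝔾 n]
        =ᵐ[P] fun ω => (μs n ω A).toReal / (μs n ω Set.univ).toReal)) := by

  classical
  have hκm : Measurable (fun x => (κ x : Measure S)) := κ.measurable
  have hbind_add : ∀ ν₁ ν₂ : Measure S,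
      (ν₁ + ν₂).bind (fun x => κ x) = ν₁.bind (fun x => κ x) + ν₂.bind (fun x => κ x) := by
    intro ν₁ ν₂
    ext B hB
    rw [Measure.add_apply, Measure.bind_apply hB hκm.aemeasurable, Measure.bind_apply hB hκm.aemeasurable,
      Measure.bind_apply hB hκm.aemeasurable, lintegral_add_measure]
  refine ⟨?_, ?_, ?_⟩
  · intro ω; rw [hμs, hμ]; simp
  · intro n ω
    rw [hμs, hμ, Finset.sum_range_succ, ← add_assoc, ← hμ n ω, hbind_add,
      Measure.dirac_bind hκm, ← hμs]
  -- the conditional draw property of the composed urn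
  have hμm : ∀ n, Measurable (μ n) := by
    intro n
    apply Measure.measurable_of_measurable_coe
    intro B hB
    have hrw : (fun ω => μ n ω B)
        = fun ω => μ₀ B + ∑ k ∈ Finset.range n, B.indicator (1 : S → ℝ≥0∞) (Y k ω) := by
      funext ω
      rw [hμ]
      simp only [Measure.coe_add, Pi.add_apply, Measure.coe_finset_sum, Finset.sum_apply]
      congr 1
      exact Finset.sum_congr rfl fun k _ => Measure.dirac_apply' _ hB
    rw [hrw]
    exact measurable_const.add
      (Finset.measurable_sum _ fun k _ => (measurable_one.indicator hB).comp (hYm k))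
  have h𝔽le : ∀ n, 𝔽 n ≤ mΩ := by
    intro n; rw [h𝔽]
    exact iSup₂_le fun k _ => sup_le (hXm k).comap_le (hYm k).comap_le
  have h𝔾le𝔽 : ∀ n, 𝔾 n ≤ 𝔽 n := by
    intro n; rw [h𝔾, h𝔽]
    exact iSup₂_mono fun k _ => le_sup_right
  have h𝔾le : ∀ n, 𝔾 n ≤ mΩ := fun n => (h𝔾le𝔽 n).trans (h𝔽le n)
  have h𝔽X : ∀ n, 𝔽 n ⊔ MeasurableSpace.comap (X n) inferInstance ≤ mΩ :=
    fun n => sup_le (h𝔽le n) (hXm n).comap_le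
  intro n A hA
  set c : ℝ≥0∞ := μ₀ Set.univ + n with hc
  have hc_ne : c ≠ 0 := by
    intro h
    rw [hc] at h
    exact hμ₀ (Measure.measure_univ_eq_zero.mp (by
      simpa using (add_eq_zero.mp h).1))
  have hc_top : c ≠ ∞ := by
    rw [hc]
    exact ENNReal.add_ne_top.mpr ⟨measure_ne_top μ₀ _, ENNReal.natCast_ne_top n⟩
  have huniv : ∀ ω, μ n ω Set.univ = c := by
    intro ω
    rw [hμ]
    simp only [Measure.coe_add, Pi.add_apply, Measure.coe_finset_sum, Finset.sum_apply,
      measure_univ, Finset.sum_const, Finset.card_range, nsmul_eq_mul, mul_one, hc]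
  have hμs_univ : ∀ ω, μs n ω Set.univ = c := by
    intro ω
    rw [hμs, Measure.bind_apply MeasurableSet.univ hκm.aemeasurable]
    simp only [measure_univ]
    rw [lintegral_one, huniv]
  have hμsA : ∀ ω, μs n ω A
      = μ₀.bind (fun x => κ x) A + ∑ k ∈ Finset.range n, κ (Y k ω) A := by
    intro ω
    rw [hμs, hμ, Measure.bind_apply hA hκm.aemeasurable, lintegral_add_measure,
      lintegral_finset_sum_measure, Measure.bind_apply hA hκm.aemeasurable]
    congr 1
    exact Finset.sum_congr rfl fun k _ => lintegral_dirac' _ (κ.measurable_coe hA)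
  have hYk𝔾 : ∀ k, k < n → Measurable[𝔾 n] (Y k) := by
    intro k hk
    rw [measurable_iff_comap_le, h𝔾]
    exact le_biSup (fun k => MeasurableSpace.comap (Y k) inferInstance)
      (Finset.mem_range.mpr hk)
  have hgmeas : Measurable[𝔾 n] (fun ω => μs n ω A) := by
    have hrw : (fun ω => μs n ω A)
        = fun ω => μ₀.bind (fun x => κ x) A + ∑ k ∈ Finset.range n, κ (Y k ω) A :=
      funext hμsA
    rw [hrw]
    exact measurable_const.add (Finset.measurable_sum _ fun k hk =>
      (κ.measurable_coe hA).comp (hYk𝔾 k (Finset.mem_range.mp hk)))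
  have hgmeasΩ : Measurable (fun ω => μs n ω A) := hgmeas.mono (h𝔾le n) le_rfl
  have hμsA_le : ∀ ω, μs n ω A ≤ c := fun ω => (hμs_univ ω) ▸ measure_mono (Set.subset_univ A)
  -- indicator integrability
  have hind : ∀ (Z : Ω → S), Measurable Z → ∀ B : Set S, MeasurableSet B →
      (fun ω => Set.indicator B (fun _ => (1 : ℝ)) (Z ω))
        = Set.indicator (Z ⁻¹' B) (fun _ => (1 : ℝ)) := by
    intro Z hZ B hB
    funext ω
    by_cases h : Z ω ∈ B <;>
      simp [Set.indicator_of_mem, Set.indicator_of_notMem, h, Set.mem_preimage]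
  have hintX : ∀ B : Set S, MeasurableSet B →
      Integrable (fun ω => Set.indicator B (fun _ => (1 : ℝ)) (X n ω)) P := by
    intro B hB
    rw [hind (X n) (hXm n) B hB]
    exact (integrable_const (1 : ℝ)).indicator ((hXm n) hB)
  have hintY : Integrable (fun ω => Set.indicator A (fun _ => (1 : ℝ)) (Y n ω)) P := by
    rw [hind (Y n) (hYm n) A hA]
    exact (integrable_const (1 : ℝ)).indicator ((hYm n) hA)
  -- key claim : set integral of κ (X n) A over 𝔽 n-sets
  have key : ∀ s : Set Ω, MeasurableSet[𝔽 n] s →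
      ∫⁻ ω in s, κ (X n ω) A ∂P = c⁻¹ * ∫⁻ ω in s, μs n ω A ∂P := by
    intro s hs
    have hsΩ : MeasurableSet s := h𝔽le n s hs
    have hmap : Measure.map (X n) (P.restrict s) = c⁻¹ • (P.restrict s).bind (μ n) := by
      ext B hB
      rw [Measure.map_apply (hXm n) hB, Measure.smul_apply, smul_eq_mul,
        Measure.bind_apply hB (hμm n).aemeasurable]
      have hBm : Measurable (fun ω => μ n ω B) := (Measure.measurable_coe hB).comp (hμm n)
      have hBle : ∀ ω, μ n ω B ≤ c := fun ω => (huniv ω) ▸ measure_mono (Set.subset_univ B)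
      have h2 : ∫ ω in s, Set.indicator B (fun _ => (1 : ℝ)) (X n ω) ∂P
          = ∫ ω in s, (μ n ω B).toReal / (μ n ω Set.univ).toReal ∂P := by
        rw [← setIntegral_condExp (h𝔽le n) (hintX B hB) hs]
        exact integral_congr_ae (ae_restrict_of_ae (hdraw n B hB))
      have hL : ∫ ω in s, Set.indicator B (fun _ => (1 : ℝ)) (X n ω) ∂P
          = (P.restrict s (X n ⁻¹' B)).toReal := by
        rw [hind (X n) (hXm n) B hB]
        exact integral_indicator_one ((hXm n) hB)
      have hR : ∫ ω in s, (μ n ω B).toReal / (μ n ω Set.univ).toReal ∂P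
          = (∫⁻ ω in s, μ n ω B ∂P).toReal / c.toReal := by
        have : ∀ ω, (μ n ω B).toReal / (μ n ω Set.univ).toReal
            = (μ n ω B).toReal / c.toReal := fun ω => by rw [huniv]
        simp only [this]
        rw [integral_div]
        congr 1
        rw [← integral_toReal (hBm.aemeasurable.restrict)
          (Filter.Eventually.of_forall fun ω => lt_of_le_of_lt (hBle ω) hc_top.lt_top)]
      have hfin1 : P.restrict s (X n ⁻¹' B) ≠ ∞ := measure_ne_top _ _
      have hfin2 : ∫⁻ ω in s, μ n ω B ∂P ≠ ∞ := by
        refine ne_top_of_le_ne_top ?_ (lintegral_mono fun ω => hBle ω)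
        rw [setLIntegral_const]
        exact ENNReal.mul_ne_top hc_top (measure_ne_top _ _)
      have := hL.symm.trans (h2.trans hR)
      rw [← ENNReal.toReal_eq_toReal_iff' hfin1 (ENNReal.mul_ne_top
        (ENNReal.inv_ne_top.mpr hc_ne) hfin2)]
      rw [this, ENNReal.toReal_mul, ENNReal.toReal_inv, div_eq_mul_inv, mul_comm]
    calc ∫⁻ ω in s, κ (X n ω) A ∂P
        = ∫⁻ x, κ x A ∂(Measure.map (X n) (P.restrict s)) :=
          (lintegral_map (κ.measurable_coe hA) (hXm n)).symm
      _ = c⁻¹ * ∫⁻ x, κ x A ∂((P.restrict s).bind (μ n)) := by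
          rw [hmap, lintegral_smul_measure, smul_eq_mul]
      _ = c⁻¹ * ∫⁻ ω in s, ∫⁻ x, κ x A ∂(μ n ω) ∂P := by
          rw [Measure.lintegral_bind (hμm n).aemeasurable (κ.measurable_coe hA).aemeasurable]
      _ = c⁻¹ * ∫⁻ ω in s, μs n ω A ∂P := by
          congr 1
          refine lintegral_congr fun ω => ?_
          rw [hμs, Measure.bind_apply hA hκm.aemeasurable]
  -- rewrite the target with constant total mass
  have hgfun : (fun ω => (μs n ω A).toReal / (μs n ω Set.univ).toReal)
      = fun ω => (μs n ω A).toReal / c.toReal := by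
    funext ω; rw [hμs_univ]
  rw [hgfun]
  -- integrability of the candidate conditional expectation
  have hgmeasR : Measurable[𝔾 n] (fun ω => (μs n ω A).toReal / c.toReal) :=
    hgmeas.ennreal_toReal.div_const _
  have hgint : Integrable (fun ω => (μs n ω A).toReal / c.toReal) P := by
    refine ⟨(hgmeasR.mono (h𝔾le n) le_rfl).aestronglyMeasurable, ?_⟩
    refine HasFiniteIntegral.of_bounded (C := 1) (Filter.Eventually.of_forall fun ω => ?_)
    rw [Real.norm_eq_abs, abs_of_nonneg (by positivity)]
    rw [div_le_one (ENNReal.toReal_pos hc_ne hc_top)]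
    exact ENNReal.toReal_mono hc_top (hμsA_le ω)
  refine (ae_eq_condExp_of_forall_setIntegral_eq (h𝔾le n) hintY
    (fun s _ _ => hgint.integrableOn) ?_
    ((hgmeasR.stronglyMeasurable).aestronglyMeasurable)).symm
  intro s hs _
  have hs𝔽 : MeasurableSet[𝔽 n] s := h𝔾le𝔽 n s hs
  have hsΩ : MeasurableSet s := h𝔽le n s hs𝔽
  have hsX : MeasurableSet[𝔽 n ⊔ MeasurableSpace.comap (X n) inferInstance] s :=
    le_sup_left (α := MeasurableSpace Ω) s hs𝔽
  have hfin2 : ∫⁻ ω in s, μs n ω A ∂P ≠ ∞ := by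
    refine ne_top_of_le_ne_top ?_ (lintegral_mono fun ω => hμsA_le ω)
    rw [setLIntegral_const]
    exact ENNReal.mul_ne_top hc_top (measure_ne_top _ _)
  have hR : ∫ ω in s, Set.indicator A (fun _ => (1 : ℝ)) (Y n ω) ∂P
      = (c⁻¹ * ∫⁻ ω in s, μs n ω A ∂P).toReal := by
    rw [← setIntegral_condExp (h𝔽X n) hintY hsX]
    rw [integral_congr_ae (ae_restrict_of_ae (hY n A hA))]
    rw [← key s hs𝔽]
    refine integral_toReal (((κ.measurable_coe hA).comp (hXm n)).aemeasurable.restrict) ?_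
    refine Filter.Eventually.of_forall fun ω => ?_
    exact lt_of_le_of_lt prob_le_one ENNReal.one_lt_top
  have hLg : ∫ ω in s, (μs n ω A).toReal / c.toReal ∂P
      = (∫⁻ ω in s, μs n ω A ∂P).toReal / c.toReal := by
    rw [integral_div]
    congr 1
    rw [← integral_toReal (hgmeasΩ.aemeasurable.restrict)
      (Filter.Eventually.of_forall fun ω => lt_of_le_of_lt (hμsA_le ω) hc_top.lt_top)]
  rw [hLg, hR, ENNReal.toReal_mul, ENNReal.toReal_inv, div_eq_mul_inv, mul_comm]
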